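/- arXiv:1606.04314 — 9 statements merged into one kernel-verified Lean document; each statement's English description precedes it below -/
import Mathlib

section
/- If a linear operator T : X → X on a vector space has finite ascent and finite descent, then the ascent equals the descent; moreover if p is their common value, then X = N(T^p) ⊕ R(T^p). -/
section Helpers

variable {K X : Type*} [Field K] [AddCommGroup X] [Module K X] (T : X →ₗ[K] X)

private theorem pow_app (n m : ℕ) (x : X) :
    (T ^ (n + m)) x = (T ^ n) ((T ^ m) x) := by
  rw [pow_add, Module.End.mul_apply]

private theorem pow_app' (n : ℕ) (x : X) :
    (T ^ (n + 1)) x = (T ^ n) (T x) := by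
  rw [pow_succ, Module.End.mul_apply]

private theorem range_succ' (n : ℕ) :
    LinearMap.range (T ^ (n + 1)) = Submodule.map T (LinearMap.range (T ^ n)) := by
  rw [pow_succ', Module.End.mul_eq_comp, LinearMap.range_comp]

private theorem range_step {k : ℕ}
    (h : LinearMap.range (T ^ k) = LinearMap.range (T ^ (k + 1))) :
    ∀ m, LinearMap.range (T ^ (k + m)) = LinearMap.range (T ^ (k + m + 1))
  | 0 => h
  | m + 1 => by
    rw [← add_assoc, range_succ' T (k + m), range_succ' T (k + m + 1), range_step h m]

private theorem range_stab {k : ℕ}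
    (h : LinearMap.range (T ^ k) = LinearMap.range (T ^ (k + 1))) :
    ∀ m, LinearMap.range (T ^ k) = LinearMap.range (T ^ (k + m))
  | 0 => by simp
  | m + 1 => by rw [range_stab h m, ← add_assoc]; exact range_step T h m

end Helpers

theorem finite_ascent_descent_eq {K X : Type*} [Field K] [AddCommGroup X] [Module K X]
    (T : X →ₗ[K] X)
    (ha : ∃ k : ℕ, LinearMap.ker (T ^ k) = LinearMap.ker (T ^ (k + 1)))
    (hd : ∃ k : ℕ, LinearMap.range (T ^ k) = LinearMap.range (T ^ (k + 1))) :
    sInf {k : ℕ | LinearMap.ker (T ^ k) = LinearMap.ker (T ^ (k + 1))} =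
      sInf {k : ℕ | LinearMap.range (T ^ k) = LinearMap.range (T ^ (k + 1))} ∧
    ∀ p : ℕ, p = sInf {k : ℕ | LinearMap.ker (T ^ k) = LinearMap.ker (T ^ (k + 1))} →
      IsCompl (LinearMap.ker (T ^ p)) (LinearMap.range (T ^ p)) := by
  set A := {k : ℕ | LinearMap.ker (T ^ k) = LinearMap.ker (T ^ (k + 1))} with hA
  set D := {k : ℕ | LinearMap.range (T ^ k) = LinearMap.range (T ^ (k + 1))} with hD
  set a := sInf A with haa
  set d := sInf D with hdd
  have haA : a ∈ A := Nat.sInf_mem ha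
  have hdD : d ∈ D := Nat.sInf_mem hd
  have kstab : ∀ m, LinearMap.ker (T ^ a) = LinearMap.ker (T ^ (a + m)) :=
    Module.End.ker_pow_constant haA
  have rstab : ∀ m, LinearMap.range (T ^ d) = LinearMap.range (T ^ (d + m)) :=
    range_stab T hdD
  -- a ≤ d : ker (T^d) = ker (T^(d+1))
  have hled : a ≤ d := by
    apply Nat.sInf_le
    show LinearMap.ker (T ^ d) = LinearMap.ker (T ^ (d + 1))
    refine le_antisymm (fun x hx => ?_) (fun x hx => ?_)
    · simp only [LinearMap.mem_ker] at hx ⊢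
      rw [show d + 1 = 1 + d from by omega, pow_app, hx, map_zero]
    · simp only [LinearMap.mem_ker] at hx ⊢
      have h1 : (T ^ d) x ∈ LinearMap.range (T ^ (d + (d + a))) := by
        rw [← rstab]; exact ⟨x, rfl⟩
      obtain ⟨z, hz⟩ := h1
      have h2 : (T ^ (1 + (d + (d + a)))) z = 0 := by
        rw [pow_app, hz, ← pow_app, show 1 + d = d + 1 from by omega, hx]
      have e1 : LinearMap.ker (T ^ (d + (d + a))) = LinearMap.ker (T ^ a) := by
        rw [show d + (d + a) = a + (d + d) from by omega, ← kstab]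
      have e2 : LinearMap.ker (T ^ (1 + (d + (d + a)))) = LinearMap.ker (T ^ a) := by
        rw [show 1 + (d + (d + a)) = a + (d + d + 1) from by omega, ← kstab]
      have h3 : z ∈ LinearMap.ker (T ^ (d + (d + a))) := by
        rw [e1, ← e2]; exact h2
      rw [← hz]; exact h3
  -- d ≤ a : range (T^a) = range (T^(a+1))
  have hlea : d ≤ a := by
    apply Nat.sInf_le
    show LinearMap.range (T ^ a) = LinearMap.range (T ^ (a + 1))
    refine le_antisymm (fun y hy => ?_) (fun y hy => ?_)
    · obtain ⟨x, rfl⟩ := hy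
      have h1 : (T ^ (d + a)) x ∈ LinearMap.range (T ^ (d + (a + 1))) := by
        rw [← rstab]; exact ⟨(T ^ a) x, (pow_app T d a x).symm⟩
      obtain ⟨z, hz⟩ := h1
      have h2 : x - T z ∈ LinearMap.ker (T ^ (d + a)) := by
        simp only [LinearMap.mem_ker, map_sub, sub_eq_zero]
        rw [← pow_app' T (d + a), show d + a + 1 = d + (a + 1) from by omega, hz]
      have h3 : x - T z ∈ LinearMap.ker (T ^ a) := by
        rw [kstab d, show a + d = d + a from by omega]; exact h2
      simp only [LinearMap.mem_ker, map_sub, sub_eq_zero] at h3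
      exact ⟨z, by rw [pow_app', ← h3]⟩
    · obtain ⟨x, rfl⟩ := hy
      exact ⟨T x, (pow_app' T a x).symm⟩
  have had : a = d := le_antisymm hled hlea
  refine ⟨had, fun p hp => ?_⟩
  subst hp
  have rstab' : ∀ m, LinearMap.range (T ^ a) = LinearMap.range (T ^ (a + m)) := by
    rw [had]; exact rstab
  constructor
  · rw [disjoint_iff_inf_le]
    rintro x ⟨hxk, xr⟩
    simp only [SetLike.mem_coe, LinearMap.mem_ker] at hxk
    simp only [SetLike.mem_coe] at xr
    obtain ⟨z, rfl⟩ := xr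
    have hz : z ∈ LinearMap.ker (T ^ (a + a)) := by
      show (T ^ (a + a)) z = 0
      rw [pow_app]; exact hxk
    rw [← kstab a] at hz
    simp only [LinearMap.mem_ker] at hz
    simp [hz]
  · rw [codisjoint_iff_le_sup]
    intro x _
    have h1 : (T ^ a) x ∈ LinearMap.range (T ^ (a + a)) := by
      rw [← rstab' a]; exact ⟨x, rfl⟩
    obtain ⟨z, hz⟩ := h1
    have h2 : x - (T ^ a) z ∈ LinearMap.ker (T ^ a) := by
      simp only [LinearMap.mem_ker, map_sub, sub_eq_zero]
      rw [← pow_app, hz]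
    have hx : x = (x - (T ^ a) z) + (T ^ a) z := by abel
    rw [hx]
    exact Submodule.add_mem_sup h2 ⟨z, rfl⟩
end

section
/- If T : X → X is a bounded linear operator on a Banach space X with finite ascent and descent with common value p, then R(T^p) is a closed subspace of X. -/
/-!
Equal ascent and descent `p` make `R(T^p)` and `N(T^p)` algebraic complements of each other.
A bounded operator `f` between Banach spaces whose range has a closed algebraic complement `G`
has closed range: `(x, y) ↦ f x + y` maps `E × G` onto `F`, so it is a quotient map by the
open mapping theorem, and the preimage of `R(f)` under it is the closed subspace `E × {0}`.
-/

open LinearMap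

namespace Module.End

theorem range_pow_constant {R M : Type*} [Semiring R] [AddCommMonoid M] [Module R M]
    {f : Module.End R M} {k : ℕ} (h : range (f ^ k) = range (f ^ (k + 1))) :
    ∀ m, range (f ^ k) = range (f ^ (k + m))
  | 0 => rfl
  | m + 1 => by
    rw [← add_assoc, pow_succ', mul_eq_comp, range_comp, ← range_pow_constant h m,
      ← range_comp, ← mul_eq_comp, ← pow_succ', h]

theorem isCompl_range_ker_of_ker_sq_le_of_range_le_range_sq {R M : Type*} [Ring R]
    [AddCommGroup M] [Module R M] {g : Module.End R M} (hker : ker (g ^ 2) ≤ ker g)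
    (hrange : range g ≤ range (g ^ 2)) : IsCompl (range g) (ker g) := by
  constructor
  · rw [Submodule.disjoint_def]
    rintro - ⟨y, rfl⟩ hgy
    exact hker (by simpa [sq] using hgy)
  · rw [Submodule.codisjoint_iff_exists_add_eq]
    intro x
    obtain ⟨z, hz⟩ : g x ∈ range (g ^ 2) := hrange (mem_range_self g x)
    refine ⟨g z, x - g z, mem_range_self g z, ?_, add_sub_cancel _ _⟩
    simpa [sq, sub_eq_zero] using hz.symm

end Module.End

theorem ContinuousLinearMap.isClosed_range_of_isCompl {𝕜 E F : Type*} [NontriviallyNormedField 𝕜]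
    [NormedAddCommGroup E] [NormedSpace 𝕜 E] [CompleteSpace E]
    [NormedAddCommGroup F] [NormedSpace 𝕜 F] [CompleteSpace F]
    (f : E →L[𝕜] F) {G : Submodule 𝕜 F} (h : IsCompl (range (f : E →ₗ[𝕜] F)) G)
    (hG : IsClosed (G : Set F)) : IsClosed (range (f : E →ₗ[𝕜] F) : Set F) := by
  have : CompleteSpace G := hG.completeSpace_coe
  set A : E × G →L[𝕜] F := f.coprod G.subtypeL
  have hA : Function.Surjective A := range_eq_top.1 <| by
    simpa [A, LinearMap.range_coprod] using h.sup_eq_top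
  have hpre : A ⁻¹' (range (f : E →ₗ[𝕜] F) : Set F) = {q | (q.2 : F) = 0} := by
    ext ⟨x, y⟩
    change (f : E →ₗ[𝕜] F) x + y ∈ range (f : E →ₗ[𝕜] F) ↔ (y : F) = 0
    rw [Submodule.add_mem_iff_right _ (mem_range_self _ x)]
    exact ⟨fun hy => (Submodule.mem_bot 𝕜).1 (h.disjoint.le_bot ⟨hy, y.2⟩),
      fun hy => hy ▸ Submodule.zero_mem _⟩
  rw [← (A.isOpenMap hA).isQuotientMap A.continuous hA |>.isCoinducing.isClosed_preimage, hpre]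
  exact isClosed_eq (continuous_subtype_val.comp continuous_snd) continuous_const

theorem range_pow_closed_of_finite_ascent_descent_general {X : Type*} [NormedAddCommGroup X]
    [NormedSpace ℝ X] [CompleteSpace X] (T : X →L[ℝ] X) (p : ℕ)
    (hascEq : LinearMap.ker ((T ^ p : X →L[ℝ] X) : X →ₗ[ℝ] X) = LinearMap.ker ((T ^ (p + 1) : X →L[ℝ] X) : X →ₗ[ℝ] X))
    (hdesEq : LinearMap.range ((T ^ p : X →L[ℝ] X) : X →ₗ[ℝ] X) = LinearMap.range ((T ^ (p + 1) : X →L[ℝ] X) : X →ₗ[ℝ] X)) :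
    IsClosed ((LinearMap.range ((T ^ p : X →L[ℝ] X) : X →ₗ[ℝ] X) : Submodule ℝ X) : Set X) := by
  refine (T ^ p).isClosed_range_of_isCompl ?_ (T ^ p).isClosed_ker
  simp only [ContinuousLinearMap.toLinearMap_pow] at hascEq hdesEq ⊢
  refine Module.End.isCompl_range_ker_of_ker_sq_le_of_range_le_range_sq ?_ ?_ <;>
    rw [← pow_mul, mul_two]
  · exact (Module.End.ker_pow_constant hascEq p).ge
  · exact (Module.End.range_pow_constant hdesEq p).le

/-- If a bounded operator `T` on a Banach space has finite ascent and descent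
with common value `p`, then the range of `T ^ p` is closed. -/
theorem range_pow_closed_of_finite_ascent_descent {X : Type*} [NormedAddCommGroup X]
    [NormedSpace ℝ X] [CompleteSpace X] (T : X →L[ℝ] X) (p : ℕ)
    (hascEq : LinearMap.ker ((T ^ p : X →L[ℝ] X) : X →ₗ[ℝ] X) = LinearMap.ker ((T ^ (p + 1) : X →L[ℝ] X) : X →ₗ[ℝ] X))
    (hascMin : ∀ j : ℕ, j < p → LinearMap.ker ((T ^ j : X →L[ℝ] X) : X →ₗ[ℝ] X) ≠ LinearMap.ker ((T ^ (j + 1) : X →L[ℝ] X) : X →ₗ[ℝ] X))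
    (hdesEq : LinearMap.range ((T ^ p : X →L[ℝ] X) : X →ₗ[ℝ] X) = LinearMap.range ((T ^ (p + 1) : X →L[ℝ] X) : X →ₗ[ℝ] X))
    (hdesMin : ∀ j : ℕ, j < p → LinearMap.range ((T ^ j : X →L[ℝ] X) : X →ₗ[ℝ] X) ≠ LinearMap.range ((T ^ (j + 1) : X →L[ℝ] X) : X →ₗ[ℝ] X)) :
    IsClosed ((LinearMap.range ((T ^ p : X →L[ℝ] X) : X →ₗ[ℝ] X) : Submodule ℝ X) : Set X) :=
  range_pow_closed_of_finite_ascent_descent_general T p hascEq hdesEq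
end

section
/- A bounded linear operator T : X → X on a Banach space X has finite ascent and finite descent if and only if there exist closed subspaces V and W of X with X = V ⊕ W, both T-invariant, such that the restriction of T to V is nilpotent and the restriction of T to W is an invertible operator on W. -/
/-!
Once `p` is at least the ascent and the descent, the kernel chain and the range chain of `T` are
constant from `p` on, which makes `V = ker T^p` and `W = range T^p` complementary, `T`-invariant,
with `T^p = 0` on `V` and `T` bijective on `W`. `V` is closed as a kernel, and `W` is closed because
it is the range of the bounded injection `X ⧸ V → X` induced by `T^p` and has a closed complement.
Conversely, for a reducing pair with `T^n = 0` on `V`, every `T^m` with `m ≥ n` has kernel `V` and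
range `W`.
-/

open LinearMap

namespace Module.End

section Semiring

variable {R M : Type*} [Semiring R] [AddCommMonoid M] [Module R M] (f : Module.End R M)

theorem mapsTo_ker_pow (n : ℕ) : Set.MapsTo f (ker (f ^ n)) (ker (f ^ n)) := fun x hx => by
  rw [SetLike.mem_coe, mem_ker, ← mul_apply, ← pow_succ, pow_succ', mul_apply, mem_ker.mp hx,
    map_zero]

theorem mapsTo_range_pow (n : ℕ) : Set.MapsTo f (range (f ^ n)) (range (f ^ n)) := by
  rintro _ ⟨y, rfl⟩
  exact ⟨f y, by rw [← mul_apply, ← pow_succ, pow_succ', mul_apply]⟩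

variable {f}

theorem ker_pow_eq_of_le {k m : ℕ} (h : ker (f ^ k) = ker (f ^ (k + 1))) (hkm : k ≤ m) :
    ker (f ^ m) = ker (f ^ k) := by
  induction m, hkm using Nat.le_induction with
  | base => rfl
  | succ m _ ih =>
    rw [pow_succ, mul_eq_comp, ker_comp, ih, ← ker_comp, ← mul_eq_comp, ← pow_succ, h]

theorem range_pow_eq_of_le {k m : ℕ} (h : range (f ^ k) = range (f ^ (k + 1))) (hkm : k ≤ m) :
    range (f ^ m) = range (f ^ k) := by
  induction m, hkm using Nat.le_induction with
  | base => rfl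
  | succ m _ ih =>
    rw [pow_succ', mul_eq_comp, range_comp, ih, ← range_comp, ← mul_eq_comp, ← pow_succ', h]

end Semiring

section Ring

variable {R M : Type*} [Ring R] [AddCommGroup M] [Module R M] {f : Module.End R M}

theorem isCompl_ker_pow_range_pow {p : ℕ} (hker : ker (f ^ (p + p)) = ker (f ^ p))
    (hrange : range (f ^ (p + p)) = range (f ^ p)) : IsCompl (ker (f ^ p)) (range (f ^ p)) := by
  constructor
  · rw [Submodule.disjoint_def]
    rintro _ hx ⟨y, rfl⟩
    rwa [← mem_ker, ← hker, mem_ker, pow_add, mul_apply]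
  · rw [codisjoint_iff, Submodule.eq_top_iff']
    intro x
    obtain ⟨y, hy⟩ : (f ^ p) x ∈ range (f ^ (p + p)) := hrange ▸ mem_range_self _ x
    have hxy : x - (f ^ p) y ∈ ker (f ^ p) := by
      rw [mem_ker, map_sub, ← mul_apply, ← pow_add, hy, sub_self]
    simpa using Submodule.add_mem_sup hxy (mem_range_self (f ^ p) y)

theorem bijOn_range_pow {p : ℕ} (hker : ker (f ^ (p + 1)) = ker (f ^ p))
    (hrange : range (f ^ (p + 1)) = range (f ^ p)) :
    Set.BijOn f (range (f ^ p)) (range (f ^ p)) := by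
  refine ⟨f.mapsTo_range_pow p, ?_, ?_⟩
  · rintro _ ⟨u, rfl⟩ _ ⟨v, rfl⟩ huv
    rw [← sub_eq_zero, ← map_sub, ← mem_ker, ← hker, mem_ker, pow_succ', mul_apply, map_sub,
      map_sub, huv, sub_self]
  · rintro _ ⟨y, rfl⟩
    obtain ⟨z, hz⟩ : (f ^ p) y ∈ range (f ^ (p + 1)) := hrange ▸ mem_range_self _ y
    exact ⟨(f ^ p) z, mem_range_self _ z, by rwa [← mul_apply, ← pow_succ']⟩

variable {V W : Submodule R M}

theorem ker_pow_eq_of_isCompl {n m : ℕ} (hVW : IsCompl V W) (hV : ∀ x ∈ V, (f ^ n) x = 0)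
    (hW : Set.BijOn f W W) (hnm : n ≤ m) : ker (f ^ m) = V := by
  refine le_antisymm (fun x hx => ?_) (fun v hv => pow_map_zero_of_le hnm (hV v hv))
  obtain ⟨v, w, hv, hw, rfl⟩ := Submodule.codisjoint_iff_exists_add_eq.mp hVW.codisjoint x
  rw [mem_ker, map_add, pow_map_zero_of_le hnm (hV v hv), zero_add, pow_apply] at hx
  obtain rfl : w = 0 := (hW.iterate m).injOn hw W.zero_mem (by rw [hx, iterate_map_zero])
  simpa using hv

theorem range_pow_eq_of_isCompl {n m : ℕ} (hVW : IsCompl V W) (hV : ∀ x ∈ V, (f ^ n) x = 0)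
    (hW : Set.BijOn f W W) (hnm : n ≤ m) : range (f ^ m) = W := by
  refine le_antisymm ?_ (fun w hw => ?_)
  · rintro _ ⟨x, rfl⟩
    obtain ⟨v, w, hv, hw, rfl⟩ := Submodule.codisjoint_iff_exists_add_eq.mp hVW.codisjoint x
    rw [map_add, pow_map_zero_of_le hnm (hV v hv), zero_add, pow_apply]
    exact (hW.iterate m).mapsTo hw
  · obtain ⟨u, -, hu⟩ := (hW.iterate m).surjOn hw
    exact ⟨u, by rw [pow_apply, hu]⟩

end Ring

end Module.End

open Module.End

/-- A bounded operator on a Banach space has finite ascent and finite descent iff it has a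
reducing pair `(V, W)` of closed invariant subspaces on which `T` is respectively nilpotent
and invertible (i.e. bijective, hence invertible by the open mapping theorem). -/
theorem finite_ascent_descent_iff_reducing_pair {X : Type*} [NormedAddCommGroup X]
    [NormedSpace ℝ X] [CompleteSpace X] (T : X →L[ℝ] X) :
    ((∃ k : ℕ, LinearMap.ker ((T ^ k : X →L[ℝ] X) : X →ₗ[ℝ] X) =
        LinearMap.ker ((T ^ (k + 1) : X →L[ℝ] X) : X →ₗ[ℝ] X)) ∧
      (∃ k : ℕ, LinearMap.range ((T ^ k : X →L[ℝ] X) : X →ₗ[ℝ] X) =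
        LinearMap.range ((T ^ (k + 1) : X →L[ℝ] X) : X →ₗ[ℝ] X))) ↔
    ∃ V W : Submodule ℝ X, IsClosed (V : Set X) ∧ IsClosed (W : Set X) ∧ IsCompl V W ∧
      (∀ x ∈ V, T x ∈ V) ∧ (∀ x ∈ W, T x ∈ W) ∧
      (∃ n : ℕ, ∀ x ∈ V, (T ^ n) x = 0) ∧
      Set.BijOn T (W : Set X) (W : Set X) := by
  have hpow (n : ℕ) (x : X) : (T ^ n) x = ((T : X →ₗ[ℝ] X) ^ n) x := by
    rw [← ContinuousLinearMap.toLinearMap_pow]; rfl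
  simp only [ContinuousLinearMap.toLinearMap_pow, hpow]
  constructor
  · rintro ⟨⟨a, ha⟩, ⟨d, hd⟩⟩
    set p := max a d
    have hker (m : ℕ) (hm : p ≤ m) : ker ((T : X →ₗ[ℝ] X) ^ m) = ker ((T : X →ₗ[ℝ] X) ^ p) :=
      (ker_pow_eq_of_le ha (by omega)).trans (ker_pow_eq_of_le ha (by omega)).symm
    have hrange (m : ℕ) (hm : p ≤ m) :
        range ((T : X →ₗ[ℝ] X) ^ m) = range ((T : X →ₗ[ℝ] X) ^ p) :=
      (range_pow_eq_of_le hd (by omega)).trans (range_pow_eq_of_le hd (by omega)).symm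
    have hVW := isCompl_ker_pow_range_pow (hker _ (by omega)) (hrange _ (by omega))
    have hV : IsClosed (ker ((T : X →ₗ[ℝ] X) ^ p) : Set X) := by
      rw [← ContinuousLinearMap.toLinearMap_pow]; exact (T ^ p).isClosed_ker
    have hW : IsClosed (range ((T : X →ₗ[ℝ] X) ^ p) : Set X) := by
      rw [← ContinuousLinearMap.toLinearMap_pow] at hV hVW ⊢
      exact (T ^ p).isClosed_range_of_isCompl hVW.symm hV
    exact ⟨_, _, hV, hW, hVW, mapsTo_ker_pow _ p, mapsTo_range_pow _ p, ⟨p, fun x hx => hx⟩,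
      bijOn_range_pow (hker _ (by omega)) (hrange _ (by omega))⟩
  · rintro ⟨V, W, -, -, hVW, -, -, ⟨n, hV⟩, hW⟩
    exact ⟨⟨n, (ker_pow_eq_of_isCompl hVW hV hW le_rfl).trans
        (ker_pow_eq_of_isCompl hVW hV hW n.le_succ).symm⟩,
      ⟨n, (range_pow_eq_of_isCompl hVW hV hW le_rfl).trans
        (range_pow_eq_of_isCompl hVW hV hW n.le_succ).symm⟩⟩
end

section
/- If τ : Ω → Ω is a measurable transformation on a σ-finite measure space (Ω, Σ, μ) such that μ(τ^{-1}(A)) ≤ K·μ(A) for some constant K > 0 and all A ∈ Σ with μ(A) < ∞, then the composition operator C_τ f = f ∘ τ is a bounded linear operator from the Orlicz space L^φ(Ω) into itself. -/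
/-!
Since `μ(τ⁻¹ A) ≤ K μ(A)` on sets of finite measure and `K > 0`, the push-forward `τ_* μ` is
dominated by `K • μ`, so `∫ φ(g ∘ τ) dμ ≤ K ∫ φ(g) dμ` for every nonnegative measurable `g`.
Convexity with `φ 0 = 0` gives `φ(t x) ≤ t φ(x)` for `t ∈ [0,1]`, hence rescaling by
`c = max K 1` absorbs the factor `K`: if `∫ φ(|f|/k) ≤ 1` then `∫ φ(|f ∘ τ|/(c k)) ≤ 1`,
and therefore `‖f ∘ τ‖_φ ≤ c ‖f‖_φ`.
-/

open MeasureTheory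

/-- An Orlicz function: continuous, convex, nondecreasing on `[0,∞)`, vanishing exactly at `0`,
with `φ(x)/x → 0` as `x → 0⁺` and `φ(x)/x → ∞` as `x → ∞`. -/
def IsOrliczFn (φ : ℝ → ℝ) : Prop :=
  ContinuousOn φ (Set.Ici 0) ∧ ConvexOn ℝ (Set.Ici 0) φ ∧ MonotoneOn φ (Set.Ici 0) ∧
  (∀ x : ℝ, 0 ≤ x → (φ x = 0 ↔ x = 0)) ∧
  Filter.Tendsto (fun x => φ x / x) (nhdsWithin 0 (Set.Ioi 0)) (nhds 0) ∧
  Filter.Tendsto (fun x => φ x / x) Filter.atTop Filter.atTop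

/-- Membership in the Orlicz space `L^φ(Ω)`: `∫ φ(α|f|) dμ < ∞` for some `α > 0`. -/
def MemOrlicz (φ : ℝ → ℝ) {Ω : Type*} [MeasurableSpace Ω] (μ : Measure Ω) (f : Ω → ℝ) : Prop :=
  Measurable f ∧ ∃ α : ℝ, 0 < α ∧ ∫⁻ x, ENNReal.ofReal (φ (α * |f x|)) ∂μ < ⊤

/-- The Luxemburg norm on the Orlicz space `L^φ(Ω)`. -/
noncomputable def luxNorm (φ : ℝ → ℝ) {Ω : Type*} [MeasurableSpace Ω] (μ : Measure Ω)
    (f : Ω → ℝ) : ℝ :=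
  sInf {k : ℝ | 0 < k ∧ ∫⁻ x, ENNReal.ofReal (φ (|f x| / k)) ∂μ ≤ 1}

/-- `τ` induces a bounded composition operator `C_τ f = f ∘ τ` on `L^φ(Ω)`. -/
def BoundedCompOp (φ : ℝ → ℝ) {Ω : Type*} [MeasurableSpace Ω] (μ : Measure Ω)
    (τ : Ω → Ω) : Prop :=
  (∀ f : Ω → ℝ, MemOrlicz φ μ f → MemOrlicz φ μ (f ∘ τ)) ∧
  ∃ C : ℝ, 0 ≤ C ∧ ∀ f : Ω → ℝ, MemOrlicz φ μ f →
    luxNorm φ μ (f ∘ τ) ≤ C * luxNorm φ μ f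

/-- The kernel of `C_τ ^ k` acting on `L^φ(Ω)` (at the level of a.e. equality). -/
def kerPow (φ : ℝ → ℝ) {Ω : Type*} [MeasurableSpace Ω] (μ : Measure Ω) (τ : Ω → Ω)
    (k : ℕ) : Set (Ω → ℝ) :=
  {f | MemOrlicz φ μ f ∧ (f ∘ τ^[k]) =ᵐ[μ] (fun _ => 0)}

/-- The range of `C_τ ^ k` acting on `L^φ(Ω)`. -/
def ranPow (φ : ℝ → ℝ) {Ω : Type*} [MeasurableSpace Ω] (μ : Measure Ω) (τ : Ω → Ω)
    (k : ℕ) : Set (Ω → ℝ) :=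
  (fun f : Ω → ℝ => f ∘ τ^[k]) '' {f | MemOrlicz φ μ f}

open scoped ENNReal Pointwise

theorem ConvexOn.map_smul_le_of_map_zero {E : Type*} [AddCommGroup E] [Module ℝ E] {s : Set E}
    {f : E → ℝ} (hf : ConvexOn ℝ s f) (h0s : (0 : E) ∈ s) (hf0 : f 0 = 0) {x : E} (hx : x ∈ s)
    {t : ℝ} (ht0 : 0 ≤ t) (ht1 : t ≤ 1) : f (t • x) ≤ t * f x := by
  simpa [hf0] using hf.2 hx h0s ht0 (sub_nonneg.2 ht1) (add_sub_cancel t 1)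

theorem ContinuousOn.measurable_comp_of_nonneg {α : Type*} [MeasurableSpace α] {φ : ℝ → ℝ}
    (hφ : ContinuousOn φ (Set.Ici 0)) {g : α → ℝ} (hg : Measurable g) (hg0 : ∀ x, 0 ≤ g x) :
    Measurable fun x => φ (g x) := by
  have hcont : Continuous fun y => φ (max y 0) :=
    hφ.comp_continuous (continuous_id.max continuous_const) fun y => le_max_right y 0
  have hφg : (fun x => φ (g x)) = (fun y => φ (max y 0)) ∘ g :=
    funext fun x => by simp [max_eq_left (hg0 x)]
  exact hφg ▸ hcont.measurable.comp hg

namespace MeasureTheory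

variable {Ω : Type*} [MeasurableSpace Ω] {μ : Measure Ω} {τ : Ω → Ω}

theorem Measure.map_le_smul_of_preimage_le {c : ℝ≥0∞} (hc : c ≠ 0) (hτ : Measurable τ)
    (h : ∀ A : Set Ω, MeasurableSet A → μ A < ⊤ → μ (τ ⁻¹' A) ≤ c * μ A) :
    μ.map τ ≤ c • μ := by
  refine Measure.le_iff.2 fun A hA => ?_
  rw [Measure.map_apply hτ hA, Measure.smul_apply, smul_eq_mul]
  rcases lt_or_eq_of_le (le_top : μ A ≤ ⊤) with hfin | hinf
  · exact h A hA hfin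
  · simp [hinf, ENNReal.mul_top hc]

theorem lintegral_comp_le_of_map_le {c : ℝ≥0∞} (hτ : Measurable τ) (hmap : μ.map τ ≤ c • μ)
    {g : Ω → ℝ≥0∞} (hg : Measurable g) : ∫⁻ x, g (τ x) ∂μ ≤ c * ∫⁻ x, g x ∂μ :=
  calc ∫⁻ x, g (τ x) ∂μ = ∫⁻ x, g x ∂μ.map τ := (lintegral_map hg hτ).symm
    _ ≤ ∫⁻ x, g x ∂(c • μ) := lintegral_mono' hmap le_rfl
    _ = c * ∫⁻ x, g x ∂μ := lintegral_smul_measure c g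

end MeasureTheory

section Orlicz

variable {Ω : Type*} [MeasurableSpace Ω] {μ : Measure Ω} {φ : ℝ → ℝ}

def luxSet (φ : ℝ → ℝ) (μ : Measure Ω) (f : Ω → ℝ) : Set ℝ :=
  {k : ℝ | 0 < k ∧ ∫⁻ x, ENNReal.ofReal (φ (|f x| / k)) ∂μ ≤ 1}

theorem luxNorm_eq_sInf_luxSet (f : Ω → ℝ) : luxNorm φ μ f = sInf (luxSet φ μ f) := rfl

theorem lintegral_ofReal_comp_mul_le (hconv : ConvexOn ℝ (Set.Ici 0) φ) (hφ0 : φ 0 = 0)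
    {g : Ω → ℝ} (hg0 : ∀ x, 0 ≤ g x) {t : ℝ} (ht0 : 0 ≤ t) (ht1 : t ≤ 1) :
    ∫⁻ x, ENNReal.ofReal (φ (t * g x)) ∂μ ≤
      ENNReal.ofReal t * ∫⁻ x, ENNReal.ofReal (φ (g x)) ∂μ := by
  rw [← lintegral_const_mul' _ _ ENNReal.ofReal_ne_top]
  refine lintegral_mono fun x => ?_
  rw [← ENNReal.ofReal_mul ht0]
  exact ENNReal.ofReal_le_ofReal
    (hconv.map_smul_le_of_map_zero Set.self_mem_Ici hφ0 (Set.mem_Ici.2 (hg0 x)) ht0 ht1)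

theorem luxSet_nonempty_of_memOrlicz (hconv : ConvexOn ℝ (Set.Ici 0) φ) (hφ0 : φ 0 = 0)
    {f : Ω → ℝ} (hf : MemOrlicz φ μ f) : (luxSet φ μ f).Nonempty := by
  obtain ⟨-, α, hα, hfin⟩ := hf
  set I := ∫⁻ x, ENNReal.ofReal (φ (α * |f x|)) ∂μ
  -- `k = (I + 1) / α` makes `|f| / k = t (α |f|)` with `t = 1 / (I + 1) ≤ 1` and `t I ≤ 1`.
  set t : ℝ := 1 / (I.toReal + 1)
  have ht0 : 0 < t := by positivity
  have ht1 : t ≤ 1 := div_le_one_of_le₀ (by linarith [I.toReal_nonneg]) (by positivity)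
  refine ⟨1 / (α * t), by positivity, ?_⟩
  have hscale : ∀ x, |f x| / (1 / (α * t)) = t * (α * |f x|) := fun x => by field_simp
  calc ∫⁻ x, ENNReal.ofReal (φ (|f x| / (1 / (α * t)))) ∂μ
      = ∫⁻ x, ENNReal.ofReal (φ (t * (α * |f x|))) ∂μ := by simp_rw [hscale]
    _ ≤ ENNReal.ofReal t * I :=
        lintegral_ofReal_comp_mul_le hconv hφ0 (fun x => by positivity) ht0.le ht1
    _ = ENNReal.ofReal (t * I.toReal) := by
        rw [ENNReal.ofReal_mul ht0.le, ENNReal.ofReal_toReal hfin.ne]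
    _ ≤ 1 := by
        refine ENNReal.ofReal_le_one.2 ?_
        rw [div_mul_eq_mul_div, one_mul, div_le_one (by linarith [I.toReal_nonneg])]
        linarith

variable {τ : Ω → Ω} {K : ℝ}

theorem lintegral_ofReal_comp_le (hcont : ContinuousOn φ (Set.Ici 0)) (hτ : Measurable τ)
    (hmap : μ.map τ ≤ ENNReal.ofReal K • μ) {g : Ω → ℝ} (hg : Measurable g) (hg0 : ∀ x, 0 ≤ g x) :
    ∫⁻ x, ENNReal.ofReal (φ (g (τ x))) ∂μ ≤ ENNReal.ofReal K * ∫⁻ x, ENNReal.ofReal (φ (g x)) ∂μ :=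
  lintegral_comp_le_of_map_le hτ hmap (hcont.measurable_comp_of_nonneg hg hg0).ennreal_ofReal

theorem memOrlicz_comp (hcont : ContinuousOn φ (Set.Ici 0)) (hτ : Measurable τ)
    (hmap : μ.map τ ≤ ENNReal.ofReal K • μ) {f : Ω → ℝ} (hf : MemOrlicz φ μ f) :
    MemOrlicz φ μ (f ∘ τ) := by
  obtain ⟨hfm, α, hα, hfin⟩ := hf
  refine ⟨hfm.comp hτ, α, hα, ?_⟩
  calc ∫⁻ x, ENNReal.ofReal (φ (α * |f (τ x)|)) ∂μ
      ≤ ENNReal.ofReal K * ∫⁻ x, ENNReal.ofReal (φ (α * |f x|)) ∂μ :=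
        lintegral_ofReal_comp_le hcont hτ hmap (by fun_prop) fun x => by positivity
    _ < ⊤ := ENNReal.mul_lt_top ENNReal.ofReal_lt_top hfin

theorem smul_luxSet_subset_luxSet_comp (hcont : ContinuousOn φ (Set.Ici 0))
    (hconv : ConvexOn ℝ (Set.Ici 0) φ) (hφ0 : φ 0 = 0) (hτ : Measurable τ)
    (hmap : μ.map τ ≤ ENNReal.ofReal K • μ) {c : ℝ} (hc1 : 1 ≤ c) (hKc : K ≤ c)
    {f : Ω → ℝ} (hf : Measurable f) : c • luxSet φ μ f ⊆ luxSet φ μ (f ∘ τ) := by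
  rintro _ ⟨k, ⟨hk, hkf⟩, rfl⟩
  have hc : 0 < c := zero_lt_one.trans_le hc1
  refine ⟨smul_pos hc hk, ?_⟩
  have hscale : ∀ x, |f x| / (c • k) = c⁻¹ * (|f x| / k) := fun x => by
    rw [smul_eq_mul]; field_simp
  calc ∫⁻ x, ENNReal.ofReal (φ (|f (τ x)| / (c • k))) ∂μ
      ≤ ENNReal.ofReal K * ∫⁻ x, ENNReal.ofReal (φ (|f x| / (c • k))) ∂μ :=
        lintegral_ofReal_comp_le hcont hτ hmap (by fun_prop) fun x => by positivity
    _ ≤ ENNReal.ofReal K * (ENNReal.ofReal c⁻¹ * 1) := by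
        simp_rw [hscale]
        gcongr
        exact (lintegral_ofReal_comp_mul_le hconv hφ0 (fun x => by positivity) (by positivity)
          (inv_le_one_of_one_le₀ hc1)).trans (by gcongr)
    _ ≤ 1 := by
        rw [mul_one, ← ENNReal.ofReal_mul' (inv_nonneg.2 hc.le)]
        exact ENNReal.ofReal_le_one.2 (mul_inv_le_one_of_le₀ hKc hc.le)

end Orlicz

theorem composition_operator_bounded_general {Ω : Type*} [MeasurableSpace Ω] (μ : Measure Ω)
    (τ : Ω → Ω) (hτ : Measurable τ) (φ : ℝ → ℝ) (hφ : IsOrliczFn φ)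
    (K : ℝ) (hK : 0 < K)
    (hbd : ∀ A : Set Ω, MeasurableSet A → μ A < ⊤ → μ (τ ⁻¹' A) ≤ ENNReal.ofReal K * μ A) :
    BoundedCompOp φ μ τ := by
  obtain ⟨hcont, hconv, -, hzero, -, -⟩ := hφ
  have hφ0 : φ 0 = 0 := (hzero 0 le_rfl).2 rfl
  have hmap : μ.map τ ≤ ENNReal.ofReal K • μ :=
    Measure.map_le_smul_of_preimage_le (ENNReal.ofReal_pos.2 hK).ne' hτ hbd
  refine ⟨fun f hf => memOrlicz_comp hcont hτ hmap hf, max K 1, by positivity, fun f hf => ?_⟩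
  rw [luxNorm_eq_sInf_luxSet, luxNorm_eq_sInf_luxSet, ← smul_eq_mul,
    ← Real.sInf_smul_of_nonneg (by positivity)]
  exact csInf_le_csInf ⟨0, fun k hk => hk.1.le⟩
    ((luxSet_nonempty_of_memOrlicz hconv hφ0 hf).smul_set)
    (smul_luxSet_subset_luxSet_comp hcont hconv hφ0 hτ hmap (le_max_right K 1)
      (le_max_left K 1) hf.1)

/-- If `μ(τ⁻¹ A) ≤ K μ(A)` for all sets of finite measure, then the composition operator
`C_τ` is bounded from `L^φ(Ω)` into itself. -/
theorem composition_operator_bounded {Ω : Type*} [MeasurableSpace Ω] (μ : Measure Ω)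
    [SigmaFinite μ] (τ : Ω → Ω) (hτ : Measurable τ) (φ : ℝ → ℝ) (hφ : IsOrliczFn φ)
    (K : ℝ) (hK : 0 < K)
    (hbd : ∀ A : Set Ω, MeasurableSet A → μ A < ⊤ → μ (τ ⁻¹' A) ≤ ENNReal.ofReal K * μ A) :
    BoundedCompOp φ μ τ :=
  composition_operator_bounded_general μ τ hτ φ hφ K hK hbd
end

section
/- Let τ be a nonsingular measurable transformation on a σ-finite measure space inducing a bounded composition operator C_τ on L^φ(Ω). Then the kernel of C_τ equals L^φ(Ω₀) = {f ∈ L^φ(Ω) : f = 0 a.e. on Ω \ Ω₀}, where Ω₀ = {x : f_τ(x) = 0} and f_τ = d(μ∘τ^{-1})/dμ is the Radon–Nikodym derivative. -/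
open MeasureTheory

/-- The kernel of the composition operator `C_τ` on `L^φ(Ω)` consists of those `f ∈ L^φ(Ω)`
vanishing a.e. off `Ω₀ = {x : f_τ(x) = 0}`, where `f_τ = d(μ∘τ⁻¹)/dμ`. -/
theorem kernel_composition_operator {Ω : Type*} [MeasurableSpace Ω] (μ : Measure Ω)
    [SigmaFinite μ] (hc : μ.IsComplete) (τ : Ω → Ω) (hτ : Measurable τ)
    (hns : ∀ A : Set Ω, MeasurableSet A → μ A = 0 → μ (τ ⁻¹' A) = 0)
    (φ : ℝ → ℝ) (hφ : IsOrliczFn φ) (hb : BoundedCompOp φ μ τ) :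
    kerPow φ μ τ 1 =
      {f : Ω → ℝ | MemOrlicz φ μ f ∧
        ∀ᵐ x ∂μ, Measure.rnDeriv (Measure.map τ μ) μ x ≠ 0 → f x = 0} := by
  have hac : Measure.map τ μ ≪ μ := by
    refine Measure.AbsolutelyContinuous.mk fun s hs h0 => ?_
    rw [Measure.map_apply hτ hs]
    exact hns s hs h0
  set g := Measure.rnDeriv (Measure.map τ μ) μ with hg
  have hwd : μ.withDensity g = Measure.map τ μ :=
    Measure.withDensity_rnDeriv_eq _ _ hac
  ext f
  simp only [kerPow, Set.mem_setOf_eq, Function.iterate_one]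
  constructor
  · rintro ⟨hf, h⟩
    refine ⟨hf, ?_⟩
    have hS : MeasurableSet {x | f x ≠ 0} := (hf.1 (measurableSet_singleton 0)).compl
    have h1 : μ (τ ⁻¹' {x | f x ≠ 0}) = 0 := by
      have := h
      rw [Filter.EventuallyEq, ae_iff] at this
      simpa using this
    have h2 : (μ.withDensity g) {x | f x ≠ 0} = 0 := by
      rw [hwd, Measure.map_apply hτ hS]; exact h1
    rw [withDensity_apply g hS] at h2
    have h3 : g =ᵐ[μ.restrict {x | f x ≠ 0}] 0 :=
      (lintegral_eq_zero_iff (Measure.measurable_rnDeriv _ _)).1 h2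
    have h4 : ∀ᵐ x ∂μ, x ∈ {x | f x ≠ 0} → g x = 0 :=
      (ae_restrict_iff' hS).1 h3
    filter_upwards [h4] with x hx hgx
    by_contra hfx
    exact hgx (hx hfx)
  · rintro ⟨hf, h⟩
    refine ⟨hf, ?_⟩
    have hS : MeasurableSet {x | f x ≠ 0} := (hf.1 (measurableSet_singleton 0)).compl
    have h4 : ∀ᵐ x ∂μ, x ∈ {x | f x ≠ 0} → g x = 0 := by
      filter_upwards [h] with x hx hfx
      by_contra hgx
      exact hfx (hx hgx)
    have h3 : g =ᵐ[μ.restrict {x | f x ≠ 0}] 0 := (ae_restrict_iff' hS).2 h4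
    have h2 : (μ.withDensity g) {x | f x ≠ 0} = 0 := by
      rw [withDensity_apply g hS]
      exact (lintegral_eq_zero_iff (Measure.measurable_rnDeriv _ _)).2 h3
    rw [hwd, Measure.map_apply hτ hS] at h2
    rw [Filter.EventuallyEq, ae_iff]
    simpa using h2
end

section
/- Let τ be a nonsingular measurable transformation inducing a bounded composition operator C_τ on the Orlicz space L^φ(Ω), and let μ_k = μ∘τ^{-k}. Then C_τ has ascent k ≥ 1 if and only if k is the smallest positive integer such that the measures μ_k and μ_{k+1} are mutually absolutely continuous (equivalent). -/
open MeasureTheory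

theorem kerPow_eq_iff {Ω : Type*} [MeasurableSpace Ω] (μ : Measure Ω) [SigmaFinite μ]
    (τ : Ω → Ω) (hτ : Measurable τ)
    (hns : ∀ A : Set Ω, MeasurableSet A → μ A = 0 → μ (τ ⁻¹' A) = 0)
    (φ : ℝ → ℝ) (hφ : IsOrliczFn φ) (j : ℕ) :
    kerPow φ μ τ j = kerPow φ μ τ (j + 1) ↔
      (Measure.map (τ^[j]) μ ≪ Measure.map (τ^[j + 1]) μ ∧
       Measure.map (τ^[j + 1]) μ ≪ Measure.map (τ^[j]) μ) := by
  have hφ0 : φ 0 = 0 := (hφ.2.2.2.1 0 le_rfl).mpr rfl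
  have hmj : Measurable (τ^[j]) := hτ.iterate j
  have hmj1 : Measurable (τ^[j+1]) := hτ.iterate (j+1)
  -- kernels are monotone
  have hsubset : kerPow φ μ τ j ⊆ kerPow φ μ τ (j + 1) := by
    rintro f ⟨hf, hae⟩
    refine ⟨hf, ?_⟩
    have hS : MeasurableSet {x | f (τ^[j] x) ≠ 0} := by
      have : Measurable (fun x => f (τ^[j] x)) := hf.1.comp hmj
      exact (this (measurableSet_singleton 0)).compl
    have h0 : μ {x | f (τ^[j] x) ≠ 0} = 0 := ae_iff.mp hae
    have h1 : μ (τ ⁻¹' {x | f (τ^[j] x) ≠ 0}) = 0 := hns _ hS h0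
    rw [Filter.eventuallyEq_iff_exists_mem]
    refine ⟨(τ ⁻¹' {x | f (τ^[j] x) ≠ 0})ᶜ, ?_, fun x hx => ?_⟩
    · rw [mem_ae_iff, compl_compl]; exact h1
    · simp only [Set.mem_compl_iff, Set.mem_preimage, Set.mem_setOf_eq, not_not] at hx
      simpa [Function.comp, Function.iterate_succ_apply] using hx
  -- μ_{j+1} ≪ μ_j always
  have hac2 : Measure.map (τ^[j+1]) μ ≪ Measure.map (τ^[j]) μ := by
    refine Measure.AbsolutelyContinuous.mk fun A hA h0 => ?_
    rw [Measure.map_apply hmj hA] at h0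
    rw [Measure.map_apply hmj1 hA]
    have : τ^[j+1] ⁻¹' A = τ ⁻¹' (τ^[j] ⁻¹' A) := by
      rw [Function.iterate_succ, Set.preimage_comp]
    rw [this]
    exact hns _ (hmj hA) h0
  constructor
  · intro h
    refine ⟨Measure.AbsolutelyContinuous.mk fun A hA h0 => ?_, hac2⟩
    rw [Measure.map_apply hmj1 hA] at h0
    rw [Measure.map_apply hmj hA]
    set B : ℕ → Set Ω := fun n => A ∩ spanningSets μ n with hB
    have hBm : ∀ n, MeasurableSet (B n) := fun n => hA.inter (measurableSet_spanningSets μ n)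
    have hmem : ∀ n, ((B n).indicator (fun _ => (1:ℝ))) ∈ kerPow φ μ τ (j+1) := by
      intro n
      constructor
      · refine ⟨measurable_const.indicator (hBm n), 1, one_pos, ?_⟩
        have heq : (fun x => ENNReal.ofReal (φ (1 * |(B n).indicator (fun _ => (1:ℝ)) x|)))
            = (B n).indicator (fun _ => ENNReal.ofReal (φ 1)) := by
          funext x
          by_cases hx : x ∈ B n <;> simp [hx, hφ0]
        rw [heq, lintegral_indicator (hBm n), setLIntegral_const]
        have : μ (B n) < ⊤ := lt_of_le_of_lt (measure_mono Set.inter_subset_right)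
          (measure_spanningSets_lt_top μ n)
        exact ENNReal.mul_lt_top ENNReal.ofReal_lt_top this
      · rw [Filter.EventuallyEq, ae_iff]
        refine measure_mono_null (fun x hx => ?_) h0
        simp only [Set.mem_setOf_eq, Function.comp_apply] at hx
        have : τ^[j+1] x ∈ B n := by
          by_contra hc
          exact hx (Set.indicator_of_notMem hc _)
        exact this.1
    have hker : ∀ n, μ (τ^[j] ⁻¹' B n) = 0 := by
      intro n
      have := (h ▸ hmem n).2
      have h2 := ae_iff.mp this
      refine measure_mono_null (fun x hx => ?_) h2
      simp only [Set.mem_setOf_eq, Function.comp_apply]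
      have hx' : τ^[j] x ∈ B n := hx
      simp [Set.indicator_of_mem hx']
    have hAeq : τ^[j] ⁻¹' A = ⋃ n, τ^[j] ⁻¹' B n := by
      rw [← Set.preimage_iUnion]
      rw [hB]
      rw [← Set.inter_iUnion, iUnion_spanningSets, Set.inter_univ]
    rw [hAeq]
    exact measure_iUnion_null hker
  · rintro ⟨h1, _⟩
    refine Set.Subset.antisymm hsubset ?_
    rintro f ⟨hf, hae⟩
    refine ⟨hf, ?_⟩
    have hS : MeasurableSet {x | f x ≠ 0} := (hf.1 (measurableSet_singleton 0)).compl
    have h0 : μ (τ^[j+1] ⁻¹' {x | f x ≠ 0}) = 0 := ae_iff.mp hae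
    have h2 : Measure.map (τ^[j+1]) μ {x | f x ≠ 0} = 0 := by
      rw [Measure.map_apply hmj1 hS]; exact h0
    have h3 := h1 h2
    rw [Measure.map_apply hmj hS] at h3
    exact ae_iff.mpr h3

/-- `C_τ` has ascent `k ≥ 1` iff `k` is the first positive integer such that the measures
`μ_k = μ∘τ^{-k}` and `μ_{k+1}` are equivalent. -/
theorem ascent_eq_iff_measures_equivalent {Ω : Type*} [MeasurableSpace Ω] (μ : Measure Ω)
    [SigmaFinite μ] (hc : μ.IsComplete) (τ : Ω → Ω) (hτ : Measurable τ)
    (hns : ∀ A : Set Ω, MeasurableSet A → μ A = 0 → μ (τ ⁻¹' A) = 0)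
    (φ : ℝ → ℝ) (hφ : IsOrliczFn φ) (hb : BoundedCompOp φ μ τ) (k : ℕ) (hk : 1 ≤ k) :
    (kerPow φ μ τ k = kerPow φ μ τ (k + 1) ∧
        ∀ j : ℕ, 1 ≤ j → j < k → kerPow φ μ τ j ≠ kerPow φ μ τ (j + 1)) ↔
      ((Measure.map (τ^[k]) μ ≪ Measure.map (τ^[k + 1]) μ ∧
          Measure.map (τ^[k + 1]) μ ≪ Measure.map (τ^[k]) μ) ∧
        ∀ j : ℕ, 1 ≤ j → j < k →
          ¬(Measure.map (τ^[j]) μ ≪ Measure.map (τ^[j + 1]) μ ∧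
            Measure.map (τ^[j + 1]) μ ≪ Measure.map (τ^[j]) μ)) := by
  have K := kerPow_eq_iff μ τ hτ hns φ hφ
  constructor
  · rintro ⟨h1, h2⟩
    exact ⟨(K k).mp h1, fun j hj1 hj2 hq => h2 j hj1 hj2 ((K j).mpr hq)⟩
  · rintro ⟨h1, h2⟩
    exact ⟨(K k).mpr h1, fun j hj1 hj2 hq => h2 j hj1 hj2 ((K j).mp hq)⟩
end

section
/- Let τ be a nonsingular measurable transformation inducing a bounded composition operator C_τ on L^φ(Ω). The ascent of C_τ is infinite if and only if there is no positive integer k for which the measures μ_k = μ∘τ^{-k} and μ_{k+1} = μ∘τ^{-(k+1)} are equivalent. -/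
open MeasureTheory

/-- A composition `f ∘ g` is a.e. zero iff the support of `f` is null for the pushforward. -/
lemma comp_ae_zero_iff_aux {Ω : Type*} [MeasurableSpace Ω] (μ : Measure Ω) {g : Ω → Ω}
    (hg : Measurable g) {f : Ω → ℝ} (hf : Measurable f) :
    (f ∘ g) =ᵐ[μ] (fun _ => 0) ↔ Measure.map g μ {x | f x ≠ 0} = 0 := by
  have hms : MeasurableSet {x | f x ≠ 0} := hf (measurableSet_singleton 0).compl
  rw [Measure.map_apply hg hms, Filter.EventuallyEq, ae_iff]
  rfl

/-- Key step: equality of consecutive kernels is equivalent to `μ_k ≪ μ_{k+1}`. -/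
lemma kerPow_eq_iff_ac_aux {Ω : Type*} [MeasurableSpace Ω]
    (μ : Measure Ω) [SigmaFinite μ] (τ : Ω → Ω) (hτ : Measurable τ)
    (hns : ∀ A : Set Ω, MeasurableSet A → μ A = 0 → μ (τ ⁻¹' A) = 0)
    (φ : ℝ → ℝ) (hφ : IsOrliczFn φ) (k : ℕ) :
    kerPow φ μ τ k = kerPow φ μ τ (k + 1) ↔
      Measure.map (τ^[k]) μ ≪ Measure.map (τ^[k + 1]) μ := by
  have hφ0 : φ 0 = 0 := (hφ.2.2.2.1 0 le_rfl).mpr rfl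
  have hgk : Measurable (τ^[k]) := hτ.iterate k
  have hgk1 : Measurable (τ^[k + 1]) := hτ.iterate (k + 1)
  constructor
  · intro he
    apply Measure.AbsolutelyContinuous.mk
    intro A hA hA0
    by_contra hA0'
    -- find a piece of `A` with finite `μ`-measure and positive `μ_k`-measure
    obtain ⟨n, hn⟩ : ∃ n, Measure.map (τ^[k]) μ (A ∩ spanningSets μ n) ≠ 0 := by
      by_contra hall
      push_neg at hall
      apply hA0'
      have : A = ⋃ n, A ∩ spanningSets μ n := by
        rw [← Set.inter_iUnion, iUnion_spanningSets, Set.inter_univ]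
      rw [this]
      exact measure_iUnion_null hall
    set B : Set Ω := A ∩ spanningSets μ n with hB
    have hBm : MeasurableSet B := hA.inter (measurableSet_spanningSets μ n)
    have hBfin : μ B < ⊤ :=
      lt_of_le_of_lt (measure_mono Set.inter_subset_right) (measure_spanningSets_lt_top μ n)
    set f : Ω → ℝ := B.indicator (fun _ => (1:ℝ)) with hf
    have hfm : Measurable f := (measurable_const.indicator hBm)
    have hsupp : {x | f x ≠ 0} = B := by
      ext x
      simp [hf, Set.indicator_apply]
    have hmem : MemOrlicz φ μ f := by
      refine ⟨hfm, 1, one_pos, ?_⟩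
      have : (fun x => ENNReal.ofReal (φ (1 * |f x|))) =
          B.indicator (fun _ => ENNReal.ofReal (φ 1)) := by
        funext x
        by_cases hx : x ∈ B
        · simp [hf, Set.indicator_of_mem hx]
        · simp [hf, Set.indicator_of_notMem hx, hφ0]
      rw [this, lintegral_indicator_const hBm]
      exact ENNReal.mul_lt_top ENNReal.ofReal_lt_top hBfin
    have hfker1 : f ∈ kerPow φ μ τ (k + 1) := by
      refine ⟨hmem, (comp_ae_zero_iff_aux μ hgk1 hfm).mpr ?_⟩
      rw [hsupp]
      exact measure_mono_null Set.inter_subset_left hA0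
    rw [← he] at hfker1
    exact hn (hsupp ▸ (comp_ae_zero_iff_aux μ hgk hfm).mp hfker1.2)
  · intro hac
    apply Set.Subset.antisymm
    · rintro f ⟨hmem, hae⟩
      refine ⟨hmem, ?_⟩
      have hgm : Measurable (f ∘ τ^[k]) := hmem.1.comp hgk
      have h0 : μ {x | (f ∘ τ^[k]) x ≠ 0} = 0 := by
        have := (Filter.EventuallyEq.symm hae)
        rw [Filter.EventuallyEq, ae_iff] at hae
        exact hae
      have : (f ∘ τ^[k + 1]) = (f ∘ τ^[k]) ∘ τ := by
        rw [Function.iterate_succ]; rfl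
      rw [this]
      rw [Filter.EventuallyEq, ae_iff]
      have hpre : {x | ¬((f ∘ τ^[k]) ∘ τ) x = (fun _ => (0:ℝ)) x} =
          τ ⁻¹' {x | (f ∘ τ^[k]) x ≠ 0} := rfl
      rw [hpre]
      exact hns _ (hgm (measurableSet_singleton 0).compl) h0
    · rintro f ⟨hmem, hae⟩
      refine ⟨hmem, (comp_ae_zero_iff_aux μ hgk hmem.1).mpr ?_⟩
      exact hac ((comp_ae_zero_iff_aux μ hgk1 hmem.1).mp hae)

/-- The ascent of `C_τ` is infinite iff no positive integer `k` makes the measures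
`μ_k = μ∘τ^{-k}` and `μ_{k+1}` equivalent. -/
theorem ascent_infinite_iff_no_equivalent_measures {Ω : Type*} [MeasurableSpace Ω]
    (μ : Measure Ω) [SigmaFinite μ] (hc : μ.IsComplete) (τ : Ω → Ω) (hτ : Measurable τ)
    (hns : ∀ A : Set Ω, MeasurableSet A → μ A = 0 → μ (τ ⁻¹' A) = 0)
    (φ : ℝ → ℝ) (hφ : IsOrliczFn φ) (hb : BoundedCompOp φ μ τ) :
    (∀ k : ℕ, 1 ≤ k → kerPow φ μ τ k ≠ kerPow φ μ τ (k + 1)) ↔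
      ∀ k : ℕ, 1 ≤ k →
        ¬(Measure.map (τ^[k]) μ ≪ Measure.map (τ^[k + 1]) μ ∧
          Measure.map (τ^[k + 1]) μ ≪ Measure.map (τ^[k]) μ) := by
  have hmono : ∀ k : ℕ, Measure.map (τ^[k + 1]) μ ≪ Measure.map (τ^[k]) μ := by
    intro k
    apply Measure.AbsolutelyContinuous.mk
    intro s hs h0
    rw [Measure.map_apply (hτ.iterate k) hs] at h0
    rw [Measure.map_apply (hτ.iterate (k + 1)) hs, Function.iterate_succ, Set.preimage_comp]
    exact hns _ ((hτ.iterate k) hs) h0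
  constructor
  · intro h k hk
    rintro ⟨h1, _⟩
    exact h k hk ((kerPow_eq_iff_ac_aux μ τ hτ hns φ hφ k).mpr h1)
  · intro h k hk he
    exact h k hk ⟨(kerPow_eq_iff_ac_aux μ τ hτ hns φ hφ k).mp he, hmono k⟩
end

section
/- If τ : Ω → Ω is measure preserving (μ(τ^{-1}(E)) = μ(E) for all E ∈ Σ), then the ascent of the composition operator C_τ on the Orlicz space L^φ(Ω) equals 1. -/
open MeasureTheory

/-- If `τ` is measure preserving, then the ascent of the composition operator `C_τ`
on the Orlicz space `L^φ(Ω)` is `1`. -/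
theorem ascent_one_of_measure_preserving {Ω : Type*} [MeasurableSpace Ω] (μ : Measure Ω)
    [SigmaFinite μ] (hc : μ.IsComplete) (τ : Ω → Ω) (hτ : Measurable τ)
    (hmp : ∀ E : Set Ω, MeasurableSet E → μ (τ ⁻¹' E) = μ E)
    (φ : ℝ → ℝ) (hφ : IsOrliczFn φ) (hb : BoundedCompOp φ μ τ) :
    kerPow φ μ τ 1 = kerPow φ μ τ 2 := by
  ext f
  simp only [kerPow, Set.mem_setOf_eq, and_congr_right_iff]
  intro hf
  have hfm : Measurable f := hf.1
  set E : Set Ω := {y | f (τ y) ≠ 0} with hE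
  have hEm : MeasurableSet E := (hfm.comp hτ (measurableSet_singleton 0)).compl
  have h1 : (f ∘ τ^[1]) =ᵐ[μ] (fun _ => 0) ↔ μ E = 0 := by
    rw [Filter.EventuallyEq, ae_iff]
    simp [E, Function.comp]
  have h2 : (f ∘ τ^[2]) =ᵐ[μ] (fun _ => 0) ↔ μ (τ ⁻¹' E) = 0 := by
    rw [Filter.EventuallyEq, ae_iff]
    have : {x | ¬ (f ∘ τ^[2]) x = (fun _ => 0) x} = τ ⁻¹' E := by
      ext x
      simp [E, Function.comp, Function.iterate_succ, Set.mem_preimage]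
    rw [this]
  rw [h1, h2, hmp E hEm]
end

section
/- If τ : Ω → Ω is a nonsingular surjective measurable transformation such that μ(τ^{-1}(E)) ≥ μ(E) for all E ∈ Σ, then the ascent of the composition operator C_τ on the Orlicz space L^φ(Ω) equals 1. -/
open MeasureTheory

theorem Measure.QuasiMeasurePreserving.of_preimage_null {α β : Type*} [MeasurableSpace α]
    [MeasurableSpace β] {μ : Measure α} {ν : Measure β} {f : α → β} (hf : Measurable f)
    (hnull : ∀ s : Set β, MeasurableSet s → ν s = 0 → μ (f ⁻¹' s) = 0) :
    Measure.QuasiMeasurePreserving f μ ν :=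
  ⟨hf, Measure.AbsolutelyContinuous.mk fun s hs hs0 => by
    rw [Measure.map_apply hf hs]
    exact hnull s hs hs0⟩

theorem ae_of_ae_comp_of_le_measure_preimage {α β : Type*} [MeasurableSpace α]
    [MeasurableSpace β] {μ : Measure α} {ν : Measure β} {f : α → β}
    (hle : ∀ s : Set β, MeasurableSet s → ν s ≤ μ (f ⁻¹' s)) {p : β → Prop}
    (hp : MeasurableSet {y | p y}) (h : ∀ᵐ x ∂μ, p (f x)) : ∀ᵐ y ∂ν, p y := by
  rw [ae_iff] at h ⊢
  exact le_antisymm ((hle _ hp.compl).trans h.le) zero_le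

theorem ascent_one_of_expanding_general {Ω : Type*} [MeasurableSpace Ω] (μ : Measure Ω)
    (τ : Ω → Ω) (hτ : Measurable τ)
    (hns : ∀ A : Set Ω, MeasurableSet A → μ A = 0 → μ (τ ⁻¹' A) = 0)
    (hge : ∀ E : Set Ω, MeasurableSet E → μ E ≤ μ (τ ⁻¹' E))
    (φ : ℝ → ℝ) :
    kerPow φ μ τ 1 = kerPow φ μ τ 2 := by
  have hqmp := Measure.QuasiMeasurePreserving.of_preimage_null hτ hns
  ext f
  simp only [kerPow, Set.mem_ofPred_eq, Function.iterate_succ, ← Function.comp_assoc]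
  refine and_congr_right fun hf => ⟨fun h => hqmp.ae_eq_comp h, fun h => ?_⟩
  exact ae_of_ae_comp_of_le_measure_preimage hge ((hf.1.comp hτ) (measurableSet_singleton 0)) h

/-- If `τ` is a nonsingular surjective measurable transformation with `μ(τ⁻¹ E) ≥ μ(E)`
for all `E`, then the ascent of `C_τ` on the Orlicz space `L^φ(Ω)` is `1`. -/
theorem ascent_one_of_expanding {Ω : Type*} [MeasurableSpace Ω] (μ : Measure Ω)
    [SigmaFinite μ] (hc : μ.IsComplete) (τ : Ω → Ω) (hτ : Measurable τ)
    (hsurj : Function.Surjective τ)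
    (hns : ∀ A : Set Ω, MeasurableSet A → μ A = 0 → μ (τ ⁻¹' A) = 0)
    (hge : ∀ E : Set Ω, MeasurableSet E → μ E ≤ μ (τ ⁻¹' E))
    (φ : ℝ → ℝ) (hφ : IsOrliczFn φ) (hb : BoundedCompOp φ μ τ) :
    kerPow φ μ τ 1 = kerPow φ μ τ 2 :=
  ascent_one_of_expanding_general μ τ hτ hns hge φ
end
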